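/- Special soundness of the rerandomization-decryption Σ-protocol: given two accepting transcripts with the same commitments $(T_1,T_2,T_3)$ and distinct challenges $c_1 \neq c_2$, with responses $(r_1,r_2,r_3)$ and $(r_1',r_2',r_3')$ satisfying the verification equations $A^{r_1} g^{r_2} = \alpha^{c} T_1$, $B^{r_1} y^{r_2} \alpha^{r_3} = \beta^{c} T_2$, $g^{r_3} = y_i^{-c} T_3$ for the respective challenges, one can compute a witness: setting $r = (r_1 - r_1')/(c_1-c_2)$, $\sigma = (r_2 - r_2')/(r(c_1-c_2))$ (assuming $r \neq 0$), and $x_i = -(r_3 - r_3')/(c_1-c_2)$, it holds that $g^{x_i} = y_i$, $\alpha = (A g^{\sigma})^r$, and $\beta = (B y^{\sigma})^r \alpha^{-x_i}$. -/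

import Mathlib

/-- Power of a group element by an exponent in `ZMod q`. -/
def gp {G : Type*} [Monoid G] {q : ℕ} [NeZero q] (g : G) (a : ZMod q) : G := g ^ a.val

/-!
In a group of exponent `q`, `(a, x) ↦ gp a x` is the scalar action of the field `ZMod q`
written multiplicatively. Dividing the two accepting transcripts cancels the commitments and
leaves `X ^ (c₁ - c₂) = Y ^ (c₁ - c₂)` for each of the three claimed identities `X = Y`;
since `c₁ - c₂` is invertible in `ZMod q`, raising to `(c₁ - c₂)⁻¹` gives `X = Y`.
-/

section ExponentQ

variable {G : Type*} {q : ℕ}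

theorem mul_gp [CommMonoid G] [NeZero q] (a b : G) (x : ZMod q) :
    gp (a * b) x = gp a x * gp b x :=
  mul_pow a b _

theorem gp_one [Monoid G] [Fact q.Prime] (a : G) : gp a (1 : ZMod q) = a := by
  have : Fact (1 < q) := ⟨Fact.out (p := q.Prime) |>.one_lt⟩
  rw [gp, ZMod.val_one, pow_one]

theorem gp_add [Monoid G] [NeZero q] (hq : ∀ a : G, a ^ q = 1) (a : G) (x y : ZMod q) :
    gp a (x + y) = gp a x * gp a y := by
  rw [gp, gp, gp, ZMod.val_add, ← pow_eq_pow_mod _ (hq a), pow_add]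

theorem gp_gp [Monoid G] [NeZero q] (hq : ∀ a : G, a ^ q = 1) (a : G) (x y : ZMod q) :
    gp (gp a x) y = gp a (x * y) := by
  rw [gp, gp, gp, ZMod.val_mul, ← pow_eq_pow_mod _ (hq a), pow_mul]

theorem gp_left_injective [Monoid G] [Fact q.Prime] (hq : ∀ a : G, a ^ q = 1) {d : ZMod q}
    (hd : d ≠ 0) : Function.Injective (fun a : G => gp a d) := fun a b h => by
  simpa only [gp_gp hq, mul_inv_cancel₀ hd, gp_one] using congrArg (fun a => gp a d⁻¹) h

theorem gp_neg [Group G] [NeZero q] (hq : ∀ a : G, a ^ q = 1) (a : G) (x : ZMod q) :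
    gp a (-x) = (gp a x)⁻¹ :=
  eq_inv_of_mul_eq_one_left <| by
    rw [← gp_add hq, neg_add_cancel, gp, ZMod.val_zero, pow_zero]

theorem gp_sub [Group G] [NeZero q] (hq : ∀ a : G, a ^ q = 1) (a : G) (x y : ZMod q) :
    gp a (x - y) = gp a x / gp a y := by
  rw [sub_eq_add_neg, gp_add hq, gp_neg hq, div_eq_mul_inv]

end ExponentQ

/-- Special soundness of the rerandomization-decryption Σ-protocol: from two
accepting transcripts with the same commitments and distinct challenges one can
compute a witness `(r, σ, xᵢ)`. -/
theorem rrd_sigma_special_soundness {G : Type*} [CommGroup G] {q : ℕ} [Fact q.Prime]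
    (hq : ∀ a : G, a ^ q = 1)
    (g y yi A B α β T₁ T₂ T₃ : G)
    (c₁ c₂ r₁ r₂ r₃ r₁' r₂' r₃' : ZMod q)
    (hc : c₁ ≠ c₂)
    (h₁ : gp A r₁ * gp g r₂ = gp α c₁ * T₁)
    (h₂ : gp B r₁ * gp y r₂ * gp α r₃ = gp β c₁ * T₂)
    (h₃ : gp g r₃ = gp yi (-c₁) * T₃)
    (h₁' : gp A r₁' * gp g r₂' = gp α c₂ * T₁)
    (h₂' : gp B r₁' * gp y r₂' * gp α r₃' = gp β c₂ * T₂)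
    (h₃' : gp g r₃' = gp yi (-c₂) * T₃)
    (r σ xi : ZMod q)
    (hr : r = (r₁ - r₁') / (c₁ - c₂))
    (hrne : r ≠ 0)
    (hσ : σ = (r₂ - r₂') / (r * (c₁ - c₂)))
    (hxi : xi = -((r₃ - r₃') / (c₁ - c₂))) :
    gp g xi = yi ∧ α = gp (A * gp g σ) r ∧ β = gp (B * gp y σ) r * (gp α xi)⁻¹ := by
  have hd : c₁ - c₂ ≠ 0 := sub_ne_zero.mpr hc
  have hrd : r * (c₁ - c₂) = r₁ - r₁' := by rw [hr, div_mul_cancel₀ _ hd]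
  have hσrd : σ * r * (c₁ - c₂) = r₂ - r₂' := by
    rw [mul_assoc, hσ, div_mul_cancel₀ _ (mul_ne_zero hrne hd)]
  have hxid : xi * (c₁ - c₂) = r₃' - r₃ := by rw [hxi, neg_mul, div_mul_cancel₀ _ hd, neg_sub]
  have hα : gp A (r₁ - r₁') * gp g (r₂ - r₂') = gp α (c₁ - c₂) := by
    simp only [gp_sub hq, div_mul_div_comm, h₁, h₁', mul_div_mul_right_eq_div]
  have hβ : gp B (r₁ - r₁') * gp y (r₂ - r₂') * gp α (r₃ - r₃') = gp β (c₁ - c₂) := by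
    simp only [gp_sub hq, div_mul_div_comm, h₂, h₂', mul_div_mul_right_eq_div]
  have hyi : gp g (r₃' - r₃) = gp yi (c₁ - c₂) := by
    rw [← neg_sub_neg c₂ c₁, gp_sub hq, gp_sub hq, h₃, h₃', mul_div_mul_right_eq_div]
  refine ⟨gp_left_injective hq hd ?_, gp_left_injective hq hd ?_, gp_left_injective hq hd ?_⟩
  · simp only [gp_gp hq, hxid, hyi]
  · simp only [gp_gp hq, mul_gp, hrd, hσrd, hα]
  · simp only [gp_gp hq, mul_gp, ← gp_neg hq, neg_mul, hrd, hσrd, hxid, neg_sub, hβ]
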